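/- Let (K,v) be a spherically complete valued field, f ∈ O[X], and b ∈ O with vf(b) > 2vf'(b). Then there exists a unique root a of f with v(a−b) = vf(b) − vf'(b) > vf'(b). -/

import Mathlib

/-!
The Newton map `N x = x - f x / f' x` sends the closed ball `B` of radius `v (f b) - v (f' b)`
around `b` into itself: on `B` the valuation of `f'` is constant, equal to `v (f' b)`, and
`v (f x) ≥ v (f b)`. Taylor expansion with integral coefficients shows that `N` strictly contracts
distances on `B`. In a spherically complete ultrametric space such a map has a fixed point, which
is a root of `f`; strict contraction makes it unique, and the dominant term of the Taylor expansion at `b` gives `v (a - b)`.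
-/

section Ultrametric

variable {Y Y' : Type*} {Γ Γ' : Type*} [LinearOrder Γ] [OrderTop Γ]
  [LinearOrder Γ'] [OrderTop Γ']

/-- The axioms of an ultrametric space with distance values in `Γ` (with top element `∞`). -/
def IsUltrametric (u : Y → Y → Γ) : Prop :=
  (∀ y z, u y z = ⊤ ↔ y = z) ∧
  (∀ x y z, min (u y x) (u x z) ≤ u y z) ∧
  (∀ y z, u y z = u z y)

/-- The closed ball of radius `α` around `y`. -/
def closedBall (u : Y → Y → Γ) (α : Γ) (y : Y) : Set Y := {z | α ≤ u y z}

/-- `B(x,y)`, the smallest closed ball containing `x` and `y`. -/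
def smallBall (u : Y → Y → Γ) (x y : Y) : Set Y := closedBall u (u x y) x

/-- A ball: a union of a nonempty collection of closed balls having a common element. -/
def IsBall (u : Y → Y → Γ) (S : Set Y) : Prop :=
  ∃ C : Set (Γ × Y), C.Nonempty ∧ (∃ y₀, ∀ p ∈ C, y₀ ∈ closedBall u p.1 p.2) ∧
    S = ⋃ p ∈ C, closedBall u p.1 p.2

/-- Spherical completeness: every nest of balls has nonempty intersection. -/
def SphericallyComplete (u : Y → Y → Γ) : Prop :=
  ∀ N : Set (Set Y), N.Nonempty → (∀ B ∈ N, IsBall u B) →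
    IsChain (· ⊆ ·) N → (⋂₀ N).Nonempty

/-- `z'` is an attractor for `f`. -/
def IsAttractor (u : Y → Y → Γ) (u' : Y' → Y' → Γ') (f : Y → Y') (z' : Y') : Prop :=
  ∀ y : Y, f y ≠ z' → ∃ z : Y,
    u' (f y) z' < u' (f z) z' ∧ f '' smallBall u y z ⊆ smallBall u' (f y) z'

/-- A map is immediate if every element of the target is an attractor for it. -/
def Immediate (u : Y → Y → Γ) (u' : Y' → Y' → Γ') (f : Y → Y') : Prop :=
  ∀ z' : Y', IsAttractor u u' f z'

end Ultrametric

/-- The axioms of a (Krull) valuation on a field, written additively, with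
`v a = ⊤` iff `a = 0`. -/
def IsFieldVal {K : Type*} [Field K] {Γ : Type*} [AddCommGroup Γ] [LinearOrder Γ] [IsOrderedAddMonoid Γ]
    (v : K → WithTop Γ) : Prop :=
  (∀ a, v a = ⊤ ↔ a = 0) ∧ (∀ a b, v (a * b) = v a + v b) ∧
  (∀ a b, min (v a) (v b) ≤ v (a - b))

open Function Polynomial

namespace IsUltrametric

variable {Y Γ : Type*} [LinearOrder Γ] [OrderTop Γ] {u : Y → Y → Γ}

lemma mem_closedBall_self (hu : IsUltrametric u) (α : Γ) (x : Y) : x ∈ closedBall u α x :=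
  le_top.trans_eq ((hu.1 x x).2 rfl).symm

lemma closedBall_subset_closedBall (hu : IsUltrametric u) {α β : Γ} {x y : Y}
    (hy : y ∈ closedBall u α x) (hαβ : α ≤ β) : closedBall u β y ⊆ closedBall u α x :=
  fun _ hz => (le_min hy (hαβ.trans hz)).trans (hu.2.1 y x _)

lemma isBall_closedBall (hu : IsUltrametric u) (α : Γ) (x : Y) : IsBall u (closedBall u α x) :=
  ⟨{(α, x)}, Set.singleton_nonempty _, ⟨x, by simpa using hu.mem_closedBall_self α x⟩, by simp⟩

section FixedPoint

variable {g : Y → Y} {D : Set Y}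

lemma smallBall_subset_smallBall (hu : IsUltrametric u) (hball : ∀ x ∈ D, smallBall u x (g x) ⊆ D)
    (hcontr : ∀ x ∈ D, ∀ y ∈ D, x ≠ y → u x y < u (g x) (g y)) {x y : Y} (hx : x ∈ D)
    (hy : y ∈ smallBall u x (g x)) : smallBall u y (g y) ⊆ smallBall u x (g x) := by
  rcases eq_or_ne x y with rfl | hne
  · rfl
  have hy' : u x (g x) ≤ u x y := hy
  have hgy : u x (g x) ≤ u x (g y) :=
    (le_min le_rfl (hy'.trans (hcontr x hx y (hball x hx hy) hne).le)).trans (hu.2.1 (g x) x (g y))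
  have hrad : u x (g x) ≤ u y (g y) :=
    (le_min (hy'.trans_eq (hu.2.2 x y)) hgy).trans (hu.2.1 x y (g y))
  exact hu.closedBall_subset_closedBall hy hrad

lemma exists_smallBall_subset_of_isChain (hu : IsUltrametric u) (hsc : SphericallyComplete u)
    (hball : ∀ x ∈ D, smallBall u x (g x) ⊆ D)
    (hcontr : ∀ x ∈ D, ∀ y ∈ D, x ≠ y → u x y < u (g x) (g y))
    {c : Set (Set Y)} (hc : c ⊆ (fun x ↦ smallBall u x (g x)) '' D) (hchain : IsChain (· ⊆ ·) c)
    (hne : c.Nonempty) : ∃ z ∈ D, ∀ s ∈ c, smallBall u z (g z) ⊆ s := by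
  obtain ⟨z, hz⟩ := hsc c hne
    (fun s hs ↦ by obtain ⟨x, -, rfl⟩ := hc hs; exact hu.isBall_closedBall _ x) hchain
  obtain ⟨s₀, hs₀⟩ := hne
  obtain ⟨x₀, hx₀, rfl⟩ := hc hs₀
  refine ⟨z, hball x₀ hx₀ (hz _ hs₀), fun s hs ↦ ?_⟩
  obtain ⟨x, hx, rfl⟩ := hc hs
  exact hu.smallBall_subset_smallBall hball hcontr hx (hz _ hs)

/-- Zorn's lemma yields a minimal ball `B(x, g x)`; minimality forces `g x = x`, since otherwise
`B(g x, g (g x))` would be strictly smaller. -/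
theorem exists_isFixedPt (hu : IsUltrametric u) (hsc : SphericallyComplete u)
    (hD : D.Nonempty) (hball : ∀ x ∈ D, smallBall u x (g x) ⊆ D)
    (hcontr : ∀ x ∈ D, ∀ y ∈ D, x ≠ y → u x y < u (g x) (g y)) :
    ∃ a ∈ D, IsFixedPt g a := by
  obtain ⟨_, ⟨x, hx, rfl⟩, hmin⟩ := zorn_superset ((fun x ↦ smallBall u x (g x)) '' D)
    fun c hc hchain ↦ by
      rcases c.eq_empty_or_nonempty with rfl | hne
      · obtain ⟨x, hx⟩ := hD
        exact ⟨_, ⟨x, hx, rfl⟩, by simp⟩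
      · obtain ⟨z, hz, hsub⟩ := hu.exists_smallBall_subset_of_isChain hsc hball hcontr hc hchain hne
        exact ⟨_, ⟨z, hz, rfl⟩, hsub⟩
  refine ⟨x, hx, by_contra fun hne ↦ ?_⟩
  have hgx : g x ∈ smallBall u x (g x) := le_refl (u x (g x))
  have hsub := hu.smallBall_subset_smallBall hball hcontr hx hgx
  have hxx : x ∈ smallBall u (g x) (g (g x)) :=
    hmin ⟨g x, hball x hx hgx, rfl⟩ hsub (hu.mem_closedBall_self _ x)
  have hlt := hcontr x hx (g x) (hball x hx hgx) (Ne.symm hne)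
  exact (hlt.trans_le (hxx.trans_eq (hu.2.2 _ _))).false

end FixedPoint

end IsUltrametric

namespace IsFieldVal

variable {K : Type*} [Field K] {Γ : Type*} [AddCommGroup Γ] [LinearOrder Γ] [IsOrderedAddMonoid Γ]
  {v : K → WithTop Γ}

lemma map_zero (hv : IsFieldVal v) : v 0 = ⊤ := (hv.1 0).2 rfl

lemma map_one (hv : IsFieldVal v) : v 1 = 0 := by
  have h : v 1 + v 1 = v 1 + 0 := by rw [← hv.2.1, one_mul, add_zero]
  exact WithTop.add_left_cancel (fun h1 ↦ one_ne_zero ((hv.1 1).1 h1)) h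

lemma le_map_neg (hv : IsFieldVal v) (a : K) : v a ≤ v (-a) := by
  simpa [hv.map_zero] using hv.2.2 0 a

lemma map_add (hv : IsFieldVal v) (a b : K) : min (v a) (v b) ≤ v (a + b) := by
  simpa using (min_le_min_left _ (hv.le_map_neg b)).trans (hv.2.2 a (-b))

def toAddValuation (hv : IsFieldVal v) : AddValuation K (WithTop Γ) :=
  AddValuation.of v hv.map_zero hv.map_one hv.map_add hv.2.1

end IsFieldVal

namespace AddValuation

variable {R Γ₀ : Type*} [CommRing R] [LinearOrderedAddCommMonoidWithTop Γ₀] (v : AddValuation R Γ₀)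

def integer : Subring R where
  carrier := {x | 0 ≤ v x}
  mul_mem' {a b} ha hb := show 0 ≤ v (a * b) from v.map_mul a b ▸ add_nonneg ha hb
  one_mem' := v.map_one.symm.le
  add_mem' ha hb := v.map_le_add ha hb
  zero_mem' := show 0 ≤ v 0 from v.map_zero ▸ le_top
  neg_mem' {a} ha := show 0 ≤ v (-a) from (v.map_neg a).symm ▸ ha

variable {v} {p : R[X]}

lemma exists_map_integer_subtype_eq (hp : ∀ i, 0 ≤ v (p.coeff i)) :
    ∃ q : v.integer[X], q.map v.integer.subtype = p :=
  (mem_lifts p).1 ((lifts_iff_coeff_lifts p).2 fun n ↦ ⟨⟨_, hp n⟩, rfl⟩)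

lemma map_eval_nonneg (hp : ∀ i, 0 ≤ v (p.coeff i)) {x : R} (hx : 0 ≤ v x) :
    0 ≤ v (p.eval x) := by
  obtain ⟨q, rfl⟩ := exists_map_integer_subtype_eq hp
  change 0 ≤ v (eval (v.integer.subtype ⟨x, hx⟩) _)
  rw [eval_map_apply]
  exact (q.eval _).2

lemma map_coeff_derivative_nonneg (hp : ∀ i, 0 ≤ v (p.coeff i)) (i : ℕ) :
    0 ≤ v (p.derivative.coeff i) := by
  obtain ⟨q, rfl⟩ := exists_map_integer_subtype_eq hp
  rw [derivative_map, coeff_map]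
  exact (q.derivative.coeff i).2

lemma le_map_eval_sub_eval (hp : ∀ i, 0 ≤ v (p.coeff i)) {x y : R} (hx : 0 ≤ v x)
    (hy : 0 ≤ v y) : v (x - y) ≤ v (p.eval x - p.eval y) := by
  obtain ⟨q, rfl⟩ := exists_map_integer_subtype_eq hp
  obtain ⟨z, hz⟩ := q.evalSubFactor ⟨x, hx⟩ ⟨y, hy⟩
  have h := congrArg v.integer.subtype hz
  simp only [_root_.map_sub, _root_.map_mul, ← eval_map_apply, Subring.subtype_apply] at h
  rw [h, v.map_mul]
  exact le_add_of_nonneg_left z.2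

lemma le_map_eval_sub_eval_sub_derivative (hp : ∀ i, 0 ≤ v (p.coeff i)) {x y : R}
    (hx : 0 ≤ v x) (hy : 0 ≤ v y) :
    v (x - y) + v (x - y) ≤ v (p.eval x - p.eval y - p.derivative.eval y * (x - y)) := by
  obtain ⟨q, rfl⟩ := exists_map_integer_subtype_eq hp
  have hxy : (0 : Γ₀) ≤ v (x - y) := v.map_le_sub hx hy
  obtain ⟨k, hk⟩ := q.binomExpansion ⟨y, hy⟩ ⟨x - y, hxy⟩
  have h := congrArg v.integer.subtype hk
  simp only [_root_.map_add, _root_.map_mul, _root_.map_pow, ← eval_map_apply, ← derivative_map,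
    Subring.subtype_apply, add_sub_cancel] at h
  rw [h, add_assoc, add_sub_cancel_left, add_sub_cancel_left, v.map_mul, v.map_pow, two_nsmul]
  exact le_add_of_nonneg_left k.2

lemma isUltrametric_sub {K : Type*} [Field K] [Nontrivial Γ₀] (v : AddValuation K Γ₀) :
    IsUltrametric fun a b : K ↦ v (a - b) :=
  ⟨fun a b ↦ by rw [v.top_iff, sub_eq_zero],
    fun x y z ↦ by simpa using v.map_add (y - x) (x - z),
    v.map_sub_swap⟩

end AddValuation

namespace Polynomial

variable {K : Type*} [Field K] {f : K[X]} {x : K}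

lemma newtonMap_eq_sub_div (f : K[X]) (x : K) :
    f.newtonMap x = x - f.eval x / f.derivative.eval x := by
  rw [newtonMap_apply, Ring.inverse_eq_inv', coe_aeval_eq_eval, inv_mul_eq_div]

lemma derivative_eval_mul_sub_newtonMap (h : f.derivative.eval x ≠ 0) :
    f.derivative.eval x * (x - f.newtonMap x) = f.eval x := by
  rw [newtonMap_eq_sub_div, sub_sub_cancel, mul_div_cancel₀ _ h]

lemma isFixedPt_newtonMap_iff (h : f.derivative.eval x ≠ 0) :
    IsFixedPt f.newtonMap x ↔ f.eval x = 0 := by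
  rw [IsFixedPt, newtonMap_eq_sub_div, sub_eq_self, div_eq_zero_iff, or_iff_left h]

end Polynomial

section Newton

variable {K : Type*} [Field K] {Γ : Type*} [AddCommGroup Γ] [LinearOrder Γ] [IsOrderedAddMonoid Γ]
  {w : AddValuation K (WithTop Γ)} {f : K[X]} {b x y : K}

/-- The closed ball of radius `w (f b) - w (f' b)` around `b`, written without subtraction so that
the case `f b = 0` (where it is `{b}`) needs no separate treatment. -/
def newtonBall (w : AddValuation K (WithTop Γ)) (f : K[X]) (b : K) : Set K :=
  {x | w (f.eval b) ≤ w (f.derivative.eval b) + w (x - b)}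

lemma mem_newtonBall_self : b ∈ newtonBall w f b := by
  simp [newtonBall]

variable (hnewton : w (f.derivative.eval b) + w (f.derivative.eval b) < w (f.eval b))
include hnewton

lemma lt_map_sub_of_mem_newtonBall (hx : x ∈ newtonBall w f b) :
    w (f.derivative.eval b) < w (x - b) :=
  lt_of_add_lt_add_left (hnewton.trans_le hx)

variable (hf : ∀ i, 0 ≤ w (f.coeff i)) (hb : 0 ≤ w b)
include hf hb

lemma map_nonneg_of_mem_newtonBall (hx : x ∈ newtonBall w f b) : 0 ≤ w x := by
  have h0 : 0 ≤ w (f.derivative.eval b) :=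
    AddValuation.map_eval_nonneg (AddValuation.map_coeff_derivative_nonneg hf) hb
  simpa using w.map_le_add (h0.trans (lt_map_sub_of_mem_newtonBall hnewton hx).le) hb

lemma map_derivative_eval_of_mem_newtonBall (hx : x ∈ newtonBall w f b) :
    w (f.derivative.eval x) = w (f.derivative.eval b) := by
  have hlt : w (f.derivative.eval b) < w (f.derivative.eval x - f.derivative.eval b) :=
    (lt_map_sub_of_mem_newtonBall hnewton hx).trans_le
      (AddValuation.le_map_eval_sub_eval (AddValuation.map_coeff_derivative_nonneg hf)
        (map_nonneg_of_mem_newtonBall hnewton hf hb hx) hb)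
  simpa using w.map_add_eq_of_lt_left hlt

lemma derivative_eval_ne_zero_of_mem_newtonBall (hx : x ∈ newtonBall w f b) :
    f.derivative.eval x ≠ 0 := by
  rw [← w.ne_top_iff, map_derivative_eval_of_mem_newtonBall hnewton hf hb hx]
  exact (lt_map_sub_of_mem_newtonBall hnewton hx).ne_top

lemma map_eval_le_of_mem_newtonBall (hx : x ∈ newtonBall w f b) :
    w (f.eval b) ≤ w (f.eval x) := by
  have hrem := AddValuation.le_map_eval_sub_eval_sub_derivative hf
    (map_nonneg_of_mem_newtonBall hnewton hf hb hx) hb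
  have hlin : w (f.eval b) ≤ w (f.derivative.eval b * (x - b)) := w.map_mul _ _ ▸ hx
  rw [show f.eval x = f.eval b + f.derivative.eval b * (x - b)
    + (f.eval x - f.eval b - f.derivative.eval b * (x - b)) by ring]
  refine w.map_le_add (w.map_le_add le_rfl hlin) (hx.trans (le_trans ?_ hrem))
  gcongr
  exact (lt_map_sub_of_mem_newtonBall hnewton hx).le

lemma map_sub_newtonMap_of_mem_newtonBall (hx : x ∈ newtonBall w f b) :
    w (f.derivative.eval b) + w (x - f.newtonMap x) = w (f.eval x) := by
  rw [← map_derivative_eval_of_mem_newtonBall hnewton hf hb hx, ← w.map_mul,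
    derivative_eval_mul_sub_newtonMap (derivative_eval_ne_zero_of_mem_newtonBall hnewton hf hb hx)]

lemma smallBall_newtonMap_subset_newtonBall (hx : x ∈ newtonBall w f b) :
    smallBall (fun a b : K ↦ w (a - b)) x (f.newtonMap x) ⊆ newtonBall w f b := by
  intro z (hz : w (x - f.newtonMap x) ≤ w (x - z))
  have hxz : w (f.eval b) ≤ w (f.derivative.eval b) + w (x - z) :=
    ((map_eval_le_of_mem_newtonBall hnewton hf hb hx).trans
      (map_sub_newtonMap_of_mem_newtonBall hnewton hf hb hx).ge).trans (by gcongr)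
  have hzb := w.map_sub (x - b) (x - z)
  rw [sub_sub_sub_cancel_left] at hzb
  calc w (f.eval b) ≤ min (w (f.derivative.eval b) + w (x - b))
        (w (f.derivative.eval b) + w (x - z)) := le_min hx hxz
    _ = w (f.derivative.eval b) + min (w (x - b)) (w (x - z)) := min_add_add_left _ _ _
    _ ≤ w (f.derivative.eval b) + w (z - b) := by gcongr

/-- Writing `A = f' x`, `B = f' y`, the identity
`A B (N x - N y) = B ((A - B)(x - y) - (f x - f y - B (x - y))) + f y (A - B)`
exhibits `A B (N x - N y)` as a sum of terms of value `> 2 w (f' b) + w (x - y)`. -/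
lemma map_sub_lt_map_newtonMap_sub (hx : x ∈ newtonBall w f b) (hy : y ∈ newtonBall w f b)
    (hxy : x ≠ y) : w (x - y) < w (f.newtonMap x - f.newtonMap y) := by
  have hx0 := map_nonneg_of_mem_newtonBall hnewton hf hb hx
  have hy0 := map_nonneg_of_mem_newtonBall hnewton hf hb hy
  have hA := map_derivative_eval_of_mem_newtonBall hnewton hf hb hx
  have hB := map_derivative_eval_of_mem_newtonBall hnewton hf hb hy
  have hf' := AddValuation.le_map_eval_sub_eval (AddValuation.map_coeff_derivative_nonneg hf) hx0 hy0
  have hγtop : w (f.derivative.eval b) ≠ ⊤ := (lt_map_sub_of_mem_newtonBall hnewton hx).ne_top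
  have hεtop : w (x - y) ≠ ⊤ := w.ne_top_iff.2 (sub_ne_zero.2 hxy)
  have hγε : w (f.derivative.eval b) < w (x - y) := by
    have h := w.map_sub (x - b) (y - b)
    rw [sub_sub_sub_cancel_right] at h
    exact (lt_min (lt_map_sub_of_mem_newtonBall hnewton hx)
      (lt_map_sub_of_mem_newtonBall hnewton hy)).trans_le h
  have hid : f.derivative.eval x * f.derivative.eval y * (f.newtonMap x - f.newtonMap y) =
      f.derivative.eval y * ((f.derivative.eval x - f.derivative.eval y) * (x - y)
        - (f.eval x - f.eval y - f.derivative.eval y * (x - y)))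
      + f.eval y * (f.derivative.eval x - f.derivative.eval y) := by
    rw [newtonMap_eq_sub_div, newtonMap_eq_sub_div]
    field_simp [derivative_eval_ne_zero_of_mem_newtonBall hnewton hf hb hx,
      derivative_eval_ne_zero_of_mem_newtonBall hnewton hf hb hy]
    ring
  have hsum : w (f.derivative.eval b) + w (f.derivative.eval b) + w (x - y) <
      w (f.derivative.eval x * f.derivative.eval y * (f.newtonMap x - f.newtonMap y)) := by
    rw [hid]
    refine w.map_lt_add ?_ ?_
    · rw [w.map_mul, hB, add_assoc]
      refine WithTop.add_lt_add_left hγtop ((WithTop.add_lt_add_right hεtop hγε).trans_le ?_)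
      refine w.map_le_sub ?_ (AddValuation.le_map_eval_sub_eval_sub_derivative hf hx0 hy0)
      rw [w.map_mul]
      gcongr
    · rw [w.map_mul]
      exact (WithTop.add_lt_add_right hεtop hnewton).trans_le
        (add_le_add (map_eval_le_of_mem_newtonBall hnewton hf hb hy) hf')
  rw [w.map_mul, w.map_mul, hA, hB] at hsum
  exact lt_of_add_lt_add_left hsum

lemma eq_of_mem_newtonBall_of_eval_eq_zero {a a' : K} (ha : a ∈ newtonBall w f b)
    (ha' : a' ∈ newtonBall w f b) (hfa : f.eval a = 0) (hfa' : f.eval a' = 0) : a = a' := by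
  by_contra hne
  have h := map_sub_lt_map_newtonMap_sub hnewton hf hb ha ha' hne
  rw [((isFixedPt_newtonMap_iff (derivative_eval_ne_zero_of_mem_newtonBall hnewton hf hb ha)).2
      hfa).eq, ((isFixedPt_newtonMap_iff
      (derivative_eval_ne_zero_of_mem_newtonBall hnewton hf hb ha')).2 hfa').eq] at h
  exact h.false

/-- Since `f a = 0`, the Taylor expansion at `b` reads `-f b = f' b (a - b) + O((a - b)²)`, and
the first term dominates. -/
lemma map_sub_add_eq_of_mem_newtonBall {a : K} (ha : a ∈ newtonBall w f b) (hfa : f.eval a = 0) :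
    w (a - b) + w (f.derivative.eval b) = w (f.eval b) := by
  rcases eq_or_ne a b with rfl | hab
  · simp [hfa]
  have hlt : w (f.derivative.eval b * (a - b)) <
      w (f.eval a - f.eval b - f.derivative.eval b * (a - b)) := by
    rw [w.map_mul, add_comm]
    exact (WithTop.add_lt_add_left (w.ne_top_iff.2 (sub_ne_zero.2 hab))
      (lt_map_sub_of_mem_newtonBall hnewton ha)).trans_le
      (AddValuation.le_map_eval_sub_eval_sub_derivative hf
        (map_nonneg_of_mem_newtonBall hnewton hf hb ha) hb)
  have h := w.map_add_eq_of_lt_left hlt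
  rw [add_sub_cancel, hfa, zero_sub, w.map_neg, w.map_mul] at h
  rw [add_comm, h]

end Newton

/-- one-dimensional Newton's Lemma in a spherically complete valued
field: if `vf(b) > 2vf'(b)` then `f` has a unique root `a` with
`v(a − b) = vf(b) − vf'(b) > vf'(b)`. -/
theorem newtons_lemma {K : Type*} [Field K] {Γ : Type*}
    [AddCommGroup Γ] [LinearOrder Γ] [IsOrderedAddMonoid Γ] (v : K → WithTop Γ) (hv : IsFieldVal v)
    (hsc : SphericallyComplete (fun a b : K => v (a - b)))
    (f : Polynomial K) (hf : ∀ i : ℕ, 0 ≤ v (f.coeff i))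
    (b : K) (hb : 0 ≤ v b)
    (hnewton : v (Polynomial.eval b (Polynomial.derivative f)) +
        v (Polynomial.eval b (Polynomial.derivative f)) < v (Polynomial.eval b f)) :
    ∃! a : K, Polynomial.eval a f = 0 ∧
      v (Polynomial.eval b (Polynomial.derivative f)) < v (a - b) ∧
      v (a - b) + v (Polynomial.eval b (Polynomial.derivative f)) =
        v (Polynomial.eval b f) := by
  let w := hv.toAddValuation
  obtain ⟨a, ha, hfix⟩ := w.isUltrametric_sub.exists_isFixedPt hsc ⟨b, mem_newtonBall_self⟩
    (fun x hx ↦ smallBall_newtonMap_subset_newtonBall (w := w) hnewton hf hb hx)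
    (fun x hx y hy ↦ map_sub_lt_map_newtonMap_sub (w := w) hnewton hf hb hx hy)
  have hfa : f.eval a = 0 := (isFixedPt_newtonMap_iff
    (derivative_eval_ne_zero_of_mem_newtonBall (w := w) hnewton hf hb ha)).1 hfix
  refine ⟨a, ⟨hfa, lt_map_sub_of_mem_newtonBall (w := w) hnewton ha,
    map_sub_add_eq_of_mem_newtonBall (w := w) hnewton hf hb ha hfa⟩, ?_⟩
  rintro a' ⟨hfa', -, ha'⟩
  have ha'_mem : a' ∈ newtonBall w f b := (ha'.symm.trans (add_comm _ _)).le
  exact eq_of_mem_newtonBall_of_eval_eq_zero (w := w) hnewton hf hb ha'_mem ha hfa' hfa
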